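/- arXiv:1712.08258 — 5 statements merged into one kernel-verified Lean document; each statement's English description precedes it below -/
import Mathlib

section
/- The Heisenberg group H (the subgroup of GL(4,ℂ) generated by the matrices S₁, S₂, T₁, T₂) has order 32; its center equals the two-element subgroup {I, −I} (I the identity matrix); its center coincides with its commutator subgroup; and the quotient of H by its center is isomorphic to (ℤ/2)⁴. -/
open Matrix

noncomputable section

/-- The matrix `S₁`. -/
def S1m : Matrix (Fin 4) (Fin 4) ℂ := !![0,0,1,0; 0,0,0,1; 1,0,0,0; 0,1,0,0]

/-- The matrix `S₂`. -/
def S2m : Matrix (Fin 4) (Fin 4) ℂ := !![0,1,0,0; 1,0,0,0; 0,0,0,1; 0,0,1,0]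

/-- The matrix `T₁ = diag(1,1,−1,−1)`. -/
def T1m : Matrix (Fin 4) (Fin 4) ℂ := !![1,0,0,0; 0,1,0,0; 0,0,-1,0; 0,0,0,-1]

/-- The matrix `T₂ = diag(1,−1,1,−1)`. -/
def T2m : Matrix (Fin 4) (Fin 4) ℂ := !![1,0,0,0; 0,-1,0,0; 0,0,1,0; 0,0,0,-1]

lemma S1m_mul_S1m : S1m * S1m = 1 := by
  ext i j
  fin_cases i <;> fin_cases j <;>
    simp [S1m, Matrix.mul_apply, Fin.sum_univ_four, Matrix.one_apply, Matrix.vecHead, Matrix.vecTail]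

lemma S2m_mul_S2m : S2m * S2m = 1 := by
  ext i j
  fin_cases i <;> fin_cases j <;>
    simp [S2m, Matrix.mul_apply, Fin.sum_univ_four, Matrix.one_apply, Matrix.vecHead, Matrix.vecTail]

lemma T1m_mul_T1m : T1m * T1m = 1 := by
  ext i j
  fin_cases i <;> fin_cases j <;>
    simp [T1m, Matrix.mul_apply, Fin.sum_univ_four, Matrix.one_apply, Matrix.vecHead, Matrix.vecTail]

lemma T2m_mul_T2m : T2m * T2m = 1 := by
  ext i j
  fin_cases i <;> fin_cases j <;>
    simp [T2m, Matrix.mul_apply, Fin.sum_univ_four, Matrix.one_apply, Matrix.vecHead, Matrix.vecTail]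

/-- `S₁` as an element of `GL(4, ℂ)`. -/
def S1 : Matrix.GeneralLinearGroup (Fin 4) ℂ := ⟨S1m, S1m, S1m_mul_S1m, S1m_mul_S1m⟩

/-- `S₂` as an element of `GL(4, ℂ)`. -/
def S2 : Matrix.GeneralLinearGroup (Fin 4) ℂ := ⟨S2m, S2m, S2m_mul_S2m, S2m_mul_S2m⟩

/-- `T₁` as an element of `GL(4, ℂ)`. -/
def T1 : Matrix.GeneralLinearGroup (Fin 4) ℂ := ⟨T1m, T1m, T1m_mul_T1m, T1m_mul_T1m⟩

/-- `T₂` as an element of `GL(4, ℂ)`. -/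
def T2 : Matrix.GeneralLinearGroup (Fin 4) ℂ := ⟨T2m, T2m, T2m_mul_T2m, T2m_mul_T2m⟩

/-- The Heisenberg group `H`: the subgroup of `GL(4, ℂ)` generated by `S₁, S₂, T₁, T₂`. -/
def HeisenbergGroup : Subgroup (Matrix.GeneralLinearGroup (Fin 4) ℂ) :=
  Subgroup.closure {S1, S2, T1, T2}

-- matrix relations
lemma c_T1T2 : T1m * T2m = T2m * T1m := by
  ext i j
  fin_cases i <;> fin_cases j <;>
    simp [T1m, T2m, Matrix.mul_apply, Fin.sum_univ_four, Matrix.vecHead, Matrix.vecTail]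
lemma c_S1S2 : S1m * S2m = S2m * S1m := by
  ext i j
  fin_cases i <;> fin_cases j <;>
    simp [S1m, S2m, Matrix.mul_apply, Fin.sum_univ_four, Matrix.vecHead, Matrix.vecTail]
lemma c_T1S2 : T1m * S2m = S2m * T1m := by
  ext i j
  fin_cases i <;> fin_cases j <;>
    simp [T1m, S2m, Matrix.mul_apply, Fin.sum_univ_four, Matrix.vecHead, Matrix.vecTail]
lemma c_T2S1 : T2m * S1m = S1m * T2m := by
  ext i j
  fin_cases i <;> fin_cases j <;>
    simp [T2m, S1m, Matrix.mul_apply, Fin.sum_univ_four, Matrix.vecHead, Matrix.vecTail]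
lemma a_S1T1 : S1m * T1m = -(T1m * S1m) := by
  ext i j
  fin_cases i <;> fin_cases j <;>
    simp [T1m, S1m, Matrix.mul_apply, Fin.sum_univ_four, Matrix.vecHead, Matrix.vecTail]
lemma a_S2T2 : S2m * T2m = -(T2m * S2m) := by
  ext i j
  fin_cases i <;> fin_cases j <;>
    simp [T2m, S2m, Matrix.mul_apply, Fin.sum_univ_four, Matrix.vecHead, Matrix.vecTail]

abbrev GL4 := Matrix.GeneralLinearGroup (Fin 4) ℂ

/-- the central element `-1`. -/
noncomputable def zc : GL4 := -1

lemma zc_val : (zc : Matrix (Fin 4) (Fin 4) ℂ) = -1 := by simp [zc]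
lemma S1_val : (S1 : Matrix (Fin 4) (Fin 4) ℂ) = S1m := rfl
lemma S2_val : (S2 : Matrix (Fin 4) (Fin 4) ℂ) = S2m := rfl
lemma T1_val : (T1 : Matrix (Fin 4) (Fin 4) ℂ) = T1m := rfl
lemma T2_val : (T2 : Matrix (Fin 4) (Fin 4) ℂ) = T2m := rfl

lemma zc_comm (g : GL4) : Commute zc g := by
  unfold Commute SemiconjBy
  rw [zc, neg_one_mul, mul_neg_one]
lemma zc_sq : zc * zc = 1 := by simp [zc]
lemma S1_sq : S1 * S1 = 1 := Units.ext S1m_mul_S1m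
lemma S2_sq : S2 * S2 = 1 := Units.ext S2m_mul_S2m
lemma T1_sq : T1 * T1 = 1 := Units.ext T1m_mul_T1m
lemma T2_sq : T2 * T2 = 1 := Units.ext T2m_mul_T2m
lemma gc_T1T2 : Commute T1 T2 := Units.ext c_T1T2
lemma gc_S1S2 : Commute S1 S2 := Units.ext c_S1S2
lemma gc_T1S2 : Commute T1 S2 := Units.ext c_T1S2
lemma gc_T2S1 : Commute T2 S1 := Units.ext c_T2S1
lemma ga_S1T1 : S1 * T1 = zc * (T1 * S1) := by
  apply Units.ext
  show S1m * T1m = (-1 : Matrix (Fin 4) (Fin 4) ℂ) * (T1m * S1m)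
  rw [a_S1T1, neg_one_mul]
lemma ga_S2T2 : S2 * T2 = zc * (T2 * S2) := by
  apply Units.ext
  show S2m * T2m = (-1 : Matrix (Fin 4) (Fin 4) ℂ) * (T2m * S2m)
  rw [a_S2T2, neg_one_mul]

section general
variable {M : Type*} [Monoid M]
lemma pow_mod_two' {u : M} (h : u * u = 1) (n : ℕ) : u ^ n = u ^ (n % 2) := by
  conv_lhs => rw [← Nat.div_add_mod n 2, pow_add, pow_mul]
  rw [show u ^ 2 = 1 by rw [pow_two, h], one_pow, one_mul]

lemma swap_pow {x y w : M} (hw : ∀ g, Commute w g)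
    (h : x * y = w * (y * x)) (m n : ℕ) :
    x ^ m * y ^ n = w ^ (m * n) * (y ^ n * x ^ m) := by
  have key : ∀ n, x * y ^ n = w ^ n * (y ^ n * x) := by
    intro n
    induction n with
    | zero => simp
    | succ n ih =>
      calc x * y ^ (n+1) = (x * y ^ n) * y := by rw [pow_succ, mul_assoc]
        _ = (w^n * (y^n * x)) * y := by rw [ih]
        _ = w^n * (y^n * (x * y)) := by simp only [mul_assoc]
        _ = w^n * (y^n * (w * (y * x))) := by rw [h]
        _ = w^n * ((y^n * w) * (y * x)) := by simp only [mul_assoc]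
        _ = w^n * ((w * y^n) * (y * x)) := by rw [(hw (y^n)).eq]
        _ = (w^n * w) * ((y^n * y) * x) := by simp only [mul_assoc]
        _ = w^(n+1) * (y^(n+1) * x) := by rw [pow_succ, pow_succ]
  induction m with
  | zero => simp
  | succ m ih =>
    calc x ^ (m+1) * y ^ n = x^m * (x * y^n) := by rw [pow_succ, mul_assoc]
      _ = x^m * (w^n * (y^n * x)) := by rw [key]
      _ = (x^m * w^n) * (y^n * x) := by simp only [mul_assoc]
      _ = (w^n * x^m) * (y^n * x) := by rw [((hw (x^m)).pow_left n).eq]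
      _ = w^n * ((x^m * y^n) * x) := by simp only [mul_assoc]
      _ = w^n * ((w^(m*n) * (y^n * x^m)) * x) := by rw [ih]
      _ = (w^n * w^(m*n)) * (y^n * (x^m * x)) := by simp only [mul_assoc]
      _ = w^((m+1)*n) * (y^n * x^(m+1)) := by
        rw [← pow_add, pow_succ, Nat.succ_mul, Nat.add_comm (m*n) n]
end general


lemma zc_pow_shift (k : ℕ) (g h : GL4) : g * (zc ^ k * h) = zc ^ k * (g * h) := by
  rw [← mul_assoc, ← ((zc_comm g).pow_left k).eq, mul_assoc]

lemma T1_shift (k a : ℕ) (h : GL4) : T1 ^ a * (zc ^ k * h) = zc ^ k * (T1 ^ a * h) :=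
  zc_pow_shift k _ h
lemma T2_shift (k a : ℕ) (h : GL4) : T2 ^ a * (zc ^ k * h) = zc ^ k * (T2 ^ a * h) :=
  zc_pow_shift k _ h
lemma S1_shift (k a : ℕ) (h : GL4) : S1 ^ a * (zc ^ k * h) = zc ^ k * (S1 ^ a * h) :=
  zc_pow_shift k _ h
lemma S2_shift (k a : ℕ) (h : GL4) : S2 ^ a * (zc ^ k * h) = zc ^ k * (S2 ^ a * h) :=
  zc_pow_shift k _ h

/-- the normal form map. -/
noncomputable def Fq (e a b c d : ℕ) : GL4 :=
  zc ^ e * (T1 ^ a * T2 ^ b * (S1 ^ c * S2 ^ d))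

lemma Fq_mul (e a b c d e' a' b' c' d' : ℕ) :
    Fq e a b c d * Fq e' a' b' c' d' =
      Fq (e + e' + c * a' + d * b') (a + a') (b + b') (c + c') (d + d') := by
  unfold Fq
  have hBA : S1 ^ c * S2 ^ d * (T1 ^ a' * T2 ^ b') =
      zc ^ (c * a' + d * b') * (T1 ^ a' * T2 ^ b' * (S1 ^ c * S2 ^ d)) := by
    calc S1 ^ c * S2 ^ d * (T1 ^ a' * T2 ^ b')
        = S1 ^ c * (S2 ^ d * T1 ^ a') * T2 ^ b' := by simp only [mul_assoc]
      _ = S1 ^ c * (T1 ^ a' * S2 ^ d) * T2 ^ b' := by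
          rw [(gc_T1S2.symm.pow_pow d a').eq]
      _ = (S1 ^ c * T1 ^ a') * (S2 ^ d * T2 ^ b') := by simp only [mul_assoc]
      _ = (zc ^ (c * a') * (T1 ^ a' * S1 ^ c)) * (zc ^ (d * b') * (T2 ^ b' * S2 ^ d)) := by
          rw [swap_pow zc_comm ga_S1T1, swap_pow zc_comm ga_S2T2]
      _ = zc ^ (c * a') * zc ^ (d * b') * (T1 ^ a' * (S1 ^ c * T2 ^ b') * S2 ^ d) := by
          simp only [mul_assoc, T1_shift, T2_shift, S1_shift, S2_shift]
      _ = zc ^ (c * a' + d * b') * (T1 ^ a' * (T2 ^ b' * S1 ^ c) * S2 ^ d) := by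
          rw [pow_add, (gc_T2S1.symm.pow_pow c b').eq]
      _ = zc ^ (c * a' + d * b') * (T1 ^ a' * T2 ^ b' * (S1 ^ c * S2 ^ d)) := by
          simp only [mul_assoc]
  calc zc ^ e * (T1 ^ a * T2 ^ b * (S1 ^ c * S2 ^ d)) *
        (zc ^ e' * (T1 ^ a' * T2 ^ b' * (S1 ^ c' * S2 ^ d')))
      = zc ^ e * zc ^ e' * ((T1 ^ a * T2 ^ b) * ((S1 ^ c * S2 ^ d) * (T1 ^ a' * T2 ^ b'))
          * (S1 ^ c' * S2 ^ d')) := by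
        simp only [mul_assoc, T1_shift, T2_shift, S1_shift, S2_shift]
    _ = zc ^ e * zc ^ e' * ((T1 ^ a * T2 ^ b) *
          (zc ^ (c * a' + d * b') * (T1 ^ a' * T2 ^ b' * (S1 ^ c * S2 ^ d)))
          * (S1 ^ c' * S2 ^ d')) := by rw [hBA]
    _ = zc ^ e * zc ^ e' * zc ^ (c * a' + d * b') * ((T1 ^ a * T2 ^ b) *
          (T1 ^ a' * T2 ^ b') * ((S1 ^ c * S2 ^ d) * (S1 ^ c' * S2 ^ d'))) := by
        simp only [mul_assoc, T1_shift, T2_shift, S1_shift, S2_shift]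
    _ = zc ^ (e + e' + c * a' + d * b') * (T1 ^ (a + a') * T2 ^ (b + b') *
          (S1 ^ (c + c') * S2 ^ (d + d'))) := by
        have h1 : T1 ^ a * T2 ^ b * (T1 ^ a' * T2 ^ b') = T1 ^ (a + a') * T2 ^ (b + b') := by
          calc T1 ^ a * T2 ^ b * (T1 ^ a' * T2 ^ b')
              = T1 ^ a * (T2 ^ b * T1 ^ a') * T2 ^ b' := by simp only [mul_assoc]
            _ = T1 ^ a * (T1 ^ a' * T2 ^ b) * T2 ^ b' := by
                rw [(gc_T1T2.symm.pow_pow b a').eq]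
            _ = (T1 ^ a * T1 ^ a') * (T2 ^ b * T2 ^ b') := by simp only [mul_assoc]
            _ = T1 ^ (a + a') * T2 ^ (b + b') := by rw [pow_add, pow_add]
        have h2 : S1 ^ c * S2 ^ d * (S1 ^ c' * S2 ^ d') = S1 ^ (c + c') * S2 ^ (d + d') := by
          calc S1 ^ c * S2 ^ d * (S1 ^ c' * S2 ^ d')
              = S1 ^ c * (S2 ^ d * S1 ^ c') * S2 ^ d' := by simp only [mul_assoc]
            _ = S1 ^ c * (S1 ^ c' * S2 ^ d) * S2 ^ d' := by
                rw [(gc_S1S2.symm.pow_pow d c').eq]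
            _ = (S1 ^ c * S1 ^ c') * (S2 ^ d * S2 ^ d') := by simp only [mul_assoc]
            _ = S1 ^ (c + c') * S2 ^ (d + d') := by rw [pow_add, pow_add]
        rw [h1, h2, ← pow_add, ← pow_add, show e + e' + (c * a' + d * b') = e + e' + c * a' + d * b' by omega]

lemma Fq_mod (e a b c d : ℕ) :
    Fq e a b c d = Fq (e % 2) (a % 2) (b % 2) (c % 2) (d % 2) := by
  unfold Fq
  rw [pow_mod_two' zc_sq e, pow_mod_two' T1_sq a, pow_mod_two' T2_sq b,
    pow_mod_two' S1_sq c, pow_mod_two' S2_sq d]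

lemma Fq_eq_one {e a b c d : ℕ} (he : e < 2) (ha : a < 2) (hb : b < 2) (hc : c < 2)
    (hd : d < 2) (h : Fq e a b c d = 1) : e = 0 ∧ a = 0 ∧ b = 0 ∧ c = 0 ∧ d = 0 := by
  interval_cases e <;> interval_cases a <;> interval_cases b <;>
    interval_cases c <;> interval_cases d
  all_goals first
  | exact ⟨rfl, rfl, rfl, rfl, rfl⟩
  | (exfalso
     have hm := congrArg Units.val h
     simp only [Fq, pow_zero, pow_one, one_mul, mul_one, Units.val_mul, Units.val_one,
       zc_val, S1_val, S2_val, T1_val, T2_val] at hm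
     rw [← Matrix.ext_iff] at hm
     have h00 := hm 0 0
     have h11 := hm 1 1
     have h22 := hm 2 2
     simp [Matrix.mul_apply, Fin.sum_univ_four, T1m, T2m, S1m, S2m,
       Matrix.one_apply, Matrix.neg_apply, show (-1 : ℂ) ≠ 1 by norm_num] at h00 h11 h22)

/-- parameter space -/
abbrev Vp := ZMod 2 × ZMod 2 × ZMod 2 × ZMod 2 × ZMod 2

noncomputable def Fv (v : Vp) : GL4 :=
  Fq v.1.val v.2.1.val v.2.2.1.val v.2.2.2.1.val v.2.2.2.2.val

/-- product on parameters -/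
def pmul (x y : Vp) : Vp :=
  (x.1 + y.1 + x.2.2.2.1 * y.2.1 + x.2.2.2.2 * y.2.2.1,
   x.2.1 + y.2.1, x.2.2.1 + y.2.2.1, x.2.2.2.1 + y.2.2.2.1, x.2.2.2.2 + y.2.2.2.2)

/-- inverse on parameters -/
def pinv (x : Vp) : Vp :=
  (x.1 + x.2.2.2.1 * x.2.1 + x.2.2.2.2 * x.2.2.1, x.2.1, x.2.2.1, x.2.2.2.1, x.2.2.2.2)

lemma val_add2 : ∀ x y : ZMod 2, (x + y).val = (x.val + y.val) % 2 := by decide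
lemma val_e2 : ∀ e e' c a' d b' : ZMod 2,
    (e + e' + c * a' + d * b').val = (e.val + e'.val + c.val * a'.val + d.val * b'.val) % 2 := by
  decide

lemma Fv_mul (x y : Vp) : Fv x * Fv y = Fv (pmul x y) := by
  obtain ⟨e, a, b, c, d⟩ := x
  obtain ⟨e', a', b', c', d'⟩ := y
  show Fq _ _ _ _ _ * Fq _ _ _ _ _ = Fq _ _ _ _ _
  simp only [pmul]
  rw [Fq_mul, Fq_mod, val_e2 e e' c a' d b', val_add2 a a', val_add2 b b', val_add2 c c', val_add2 d d']

lemma Fv_one : Fv (0, 0, 0, 0, 0) = 1 := by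
  show Fq 0 0 0 0 0 = 1
  simp [Fq]

lemma pmul_pinv (x : Vp) : pmul x (pinv x) = (0, 0, 0, 0, 0) := by
  obtain ⟨e, a, b, c, d⟩ := x
  revert e a b c d
  decide

lemma Fv_mul_pinv (x : Vp) : Fv x * Fv (pinv x) = 1 := by
  rw [Fv_mul, pmul_pinv, Fv_one]

lemma Fv_inj : Function.Injective Fv := by
  intro x y h
  have h1 : Fv (pmul x (pinv y)) = 1 := by rw [← Fv_mul, h, Fv_mul_pinv]
  have hlt : ∀ u : ZMod 2, u.val < 2 := by decide
  obtain ⟨he, ha, hb, hc, hd⟩ :=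
    Fq_eq_one (hlt _) (hlt _) (hlt _) (hlt _) (hlt _) h1
  have hv0 : ∀ u : ZMod 2, u.val = 0 → u = 0 := by decide
  obtain ⟨e, a, b, c, d⟩ := x
  obtain ⟨e', a', b', c', d'⟩ := y
  simp only [pmul, pinv] at he ha hb hc hd
  have ha' := hv0 _ ha
  have hb' := hv0 _ hb
  have hc' := hv0 _ hc
  have hd' := hv0 _ hd
  have he' := hv0 _ he
  have key : ∀ u v : ZMod 2, u + v = 0 → u = v := by decide
  have ea := key _ _ ha'
  have eb := key _ _ hb'
  have ec := key _ _ hc'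
  have ed := key _ _ hd'
  subst ea eb ec ed
  have keye : ∀ e e' a b c d : ZMod 2,
      e + (e' + c * a + d * b) + c * a + d * b = 0 → e = e' := by decide
  have := keye _ _ _ _ _ _ he'
  subst this
  rfl

noncomputable def HS : Subgroup GL4 where
  carrier := Set.range Fv
  one_mem' := ⟨(0, 0, 0, 0, 0), Fv_one⟩
  mul_mem' := by
    rintro _ _ ⟨x, rfl⟩ ⟨y, rfl⟩
    exact ⟨pmul x y, (Fv_mul x y).symm⟩
  inv_mem' := by
    rintro _ ⟨x, rfl⟩
    exact ⟨pinv x, (inv_eq_of_mul_eq_one_right (Fv_mul_pinv x)).symm⟩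

lemma Fv_S1 : Fv (0, 0, 0, 1, 0) = S1 := by
  show Fq 0 0 0 1 0 = S1
  simp [Fq]
lemma Fv_S2 : Fv (0, 0, 0, 0, 1) = S2 := by
  show Fq 0 0 0 0 1 = S2
  simp [Fq]
lemma Fv_T1 : Fv (0, 1, 0, 0, 0) = T1 := by
  show Fq 0 1 0 0 0 = T1
  simp [Fq]
lemma Fv_T2 : Fv (0, 0, 1, 0, 0) = T2 := by
  show Fq 0 0 1 0 0 = T2
  simp [Fq]

lemma zc_eq_comm : zc = S1 * T1 * S1 * T1 := by
  rw [ga_S1T1]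
  calc zc = zc * ((T1 * (S1 * S1)) * T1) := by rw [S1_sq, mul_one, T1_sq, mul_one]
    _ = zc * (T1 * S1) * S1 * T1 := by simp only [mul_assoc]

lemma zc_mem : zc ∈ HeisenbergGroup := by
  have h1 : S1 ∈ HeisenbergGroup := Subgroup.subset_closure (by simp)
  have h2 : T1 ∈ HeisenbergGroup := Subgroup.subset_closure (by simp)
  rw [zc_eq_comm]
  exact Subgroup.mul_mem _ (Subgroup.mul_mem _ (Subgroup.mul_mem _ h1 h2) h1) h2

lemma HG_eq_HS : HeisenbergGroup = HS := by
  apply le_antisymm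
  · rw [HeisenbergGroup, Subgroup.closure_le]
    rintro g (rfl | rfl | rfl | rfl)
    · exact ⟨(0, 0, 0, 1, 0), Fv_S1⟩
    · exact ⟨(0, 0, 0, 0, 1), Fv_S2⟩
    · exact ⟨(0, 1, 0, 0, 0), Fv_T1⟩
    · exact ⟨(0, 0, 1, 0, 0), Fv_T2⟩
  · rintro _ ⟨x, rfl⟩
    have h1 : S1 ∈ HeisenbergGroup := Subgroup.subset_closure (by simp)
    have h2 : S2 ∈ HeisenbergGroup := Subgroup.subset_closure (by simp)
    have h3 : T1 ∈ HeisenbergGroup := Subgroup.subset_closure (by simp)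
    have h4 : T2 ∈ HeisenbergGroup := Subgroup.subset_closure (by simp)
    show Fq _ _ _ _ _ ∈ HeisenbergGroup
    unfold Fq
    exact Subgroup.mul_mem _ (Subgroup.pow_mem _ zc_mem _)
      (Subgroup.mul_mem _ (Subgroup.mul_mem _ (Subgroup.pow_mem _ h3 _) (Subgroup.pow_mem _ h4 _))
        (Subgroup.mul_mem _ (Subgroup.pow_mem _ h1 _) (Subgroup.pow_mem _ h2 _)))

lemma mem_HG_iff {g : GL4} : g ∈ HeisenbergGroup ↔ ∃ x : Vp, Fv x = g := by
  rw [HG_eq_HS]; rfl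

noncomputable def eHG : Vp ≃ HeisenbergGroup :=
  Equiv.ofBijective (fun v => ⟨Fv v, mem_HG_iff.2 ⟨v, rfl⟩⟩)
    ⟨fun x y h => Fv_inj (congrArg Subtype.val h),
     fun g => by obtain ⟨x, hx⟩ := mem_HG_iff.1 g.2; exact ⟨x, Subtype.ext hx⟩⟩

lemma card_HG : Nat.card HeisenbergGroup = 32 := by
  rw [← Nat.card_congr eHG]
  simp [Nat.card_eq_fintype_card]

noncomputable def pdec (g : HeisenbergGroup) : Vp := eHG.symm g

lemma Fv_pdec (g : HeisenbergGroup) : Fv (pdec g) = (g : GL4) :=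
  congrArg Subtype.val (eHG.apply_symm_apply g)

lemma pdec_spec {x : Vp} {g : HeisenbergGroup} (h : Fv x = (g : GL4)) : pdec g = x := by
  have : eHG x = g := Subtype.ext h
  rw [pdec, ← this, Equiv.symm_apply_apply]

lemma Fv_diag (e : ZMod 2) : Fv (e, 0, 0, 0, 0) = zc ^ e.val := by
  show Fq e.val 0 0 0 0 = zc ^ e.val
  simp [Fq]

lemma ZMod2_cases : ∀ u : ZMod 2, u = 0 ∨ u = 1 := by decide

lemma center_char (g : HeisenbergGroup) :
    g ∈ Subgroup.center HeisenbergGroup ↔ ((g : GL4) = 1 ∨ (g : GL4) = -1) := by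
  constructor
  · intro hg
    obtain ⟨x, hx⟩ := mem_HG_iff.1 g.2
    obtain ⟨e, a, b, c, d⟩ := x
    have hcomm : ∀ h : HeisenbergGroup, (h : GL4) * g = g * h := fun h =>
      congrArg Subtype.val (Subgroup.mem_center_iff.mp hg h)
    -- commutation with the four generators
    have c1 := hcomm ⟨S1, Subgroup.subset_closure (by simp)⟩
    have c2 := hcomm ⟨S2, Subgroup.subset_closure (by simp)⟩
    have c3 := hcomm ⟨T1, Subgroup.subset_closure (by simp)⟩
    have c4 := hcomm ⟨T2, Subgroup.subset_closure (by simp)⟩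
    rw [show ((⟨S1, Subgroup.subset_closure (by simp)⟩ : HeisenbergGroup) : GL4) = S1 from rfl,
      ← Fv_S1, ← hx, Fv_mul, Fv_mul] at c1
    rw [show ((⟨S2, Subgroup.subset_closure (by simp)⟩ : HeisenbergGroup) : GL4) = S2 from rfl,
      ← Fv_S2, ← hx, Fv_mul, Fv_mul] at c2
    rw [show ((⟨T1, Subgroup.subset_closure (by simp)⟩ : HeisenbergGroup) : GL4) = T1 from rfl,
      ← Fv_T1, ← hx, Fv_mul, Fv_mul] at c3
    rw [show ((⟨T2, Subgroup.subset_closure (by simp)⟩ : HeisenbergGroup) : GL4) = T2 from rfl,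
      ← Fv_T2, ← hx, Fv_mul, Fv_mul] at c4
    have e1 := Fv_inj c1
    have e2 := Fv_inj c2
    have e3 := Fv_inj c3
    have e4 := Fv_inj c4
    have ha : a = 0 := by
      have := congrArg (fun p : Vp => p.1) e1
      simpa [pmul, left_eq_add, add_eq_left] using this
    have hb : b = 0 := by
      have := congrArg (fun p : Vp => p.1) e2
      simpa [pmul, left_eq_add, add_eq_left] using this
    have hc : c = 0 := by
      have := congrArg (fun p : Vp => p.1) e3
      simpa [pmul, left_eq_add, add_eq_left] using this
    have hd : d = 0 := by
      have := congrArg (fun p : Vp => p.1) e4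
      simpa [pmul, left_eq_add, add_eq_left] using this
    subst ha hb hc hd
    rw [← hx, Fv_diag]
    rcases ZMod2_cases e with rfl | rfl
    · left; simp
    · right
      rw [show ((1 : ZMod 2)).val = 1 from rfl, pow_one]; rfl
  · intro hval
    apply Subgroup.mem_center_iff.mpr
    intro h
    apply Subtype.ext
    show (h : GL4) * g = g * h
    rcases hval with h1 | h1 <;> rw [h1]
    · rw [mul_one, one_mul]
    · rw [mul_neg_one, neg_one_mul]

lemma Fv_inv (x : Vp) : (Fv x)⁻¹ = Fv (pinv x) :=
  inv_eq_of_mul_eq_one_right (Fv_mul_pinv x)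

lemma comm_key : ∀ x y : Vp, ∃ ε : ZMod 2,
    pmul (pmul (pmul x y) (pinv x)) (pinv y) = (ε, 0, 0, 0, 0) := by decide

open scoped commutatorElement in
lemma center_eq_commutator :
    Subgroup.center HeisenbergGroup = commutator HeisenbergGroup := by
  apply le_antisymm
  · intro g hg
    rcases (center_char g).1 hg with h1 | h1
    · have : g = 1 := Subtype.ext h1
      rw [this]; exact Subgroup.one_mem _
    · set s1h : HeisenbergGroup := ⟨S1, Subgroup.subset_closure (by simp)⟩
      set t1h : HeisenbergGroup := ⟨T1, Subgroup.subset_closure (by simp)⟩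
      have hgeq : g = ⁅s1h, t1h⁆ := by
        apply Subtype.ext
        show (g : GL4) = ((s1h * t1h * s1h⁻¹ * t1h⁻¹ : HeisenbergGroup) : GL4)
        have hS1i : S1⁻¹ = S1 := inv_eq_of_mul_eq_one_right S1_sq
        have hT1i : T1⁻¹ = T1 := inv_eq_of_mul_eq_one_right T1_sq
        push_cast
        rw [h1, hS1i, hT1i, ← zc_eq_comm, zc]
      rw [hgeq, commutator_def]
      exact Subgroup.commutator_mem_commutator (Subgroup.mem_top _) (Subgroup.mem_top _)
  · rw [commutator_def]
    apply Subgroup.commutator_le.mpr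
    intro g _ h _
    apply (center_char _).2
    obtain ⟨x, hx⟩ := mem_HG_iff.1 g.2
    obtain ⟨y, hy⟩ := mem_HG_iff.1 h.2
    have hval : ((⁅g, h⁆ : HeisenbergGroup) : GL4) = Fv x * Fv y * (Fv x)⁻¹ * (Fv y)⁻¹ := by
      rw [hx, hy]
      push_cast
      rfl
    rw [hval, Fv_inv, Fv_inv, Fv_mul, Fv_mul, Fv_mul]
    obtain ⟨ε, hε⟩ := comm_key x y
    rw [hε, Fv_diag]
    rcases ZMod2_cases ε with rfl | rfl
    · left; simp
    · right
      rw [show ((1 : ZMod 2)).val = 1 from rfl, pow_one]; rfl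

noncomputable def Phi : HeisenbergGroup →* (Fin 4 → Multiplicative (ZMod 2)) :=
  MonoidHom.mk' (fun g => fun i =>
      Multiplicative.ofAdd (![(pdec g).2.1, (pdec g).2.2.1, (pdec g).2.2.2.1, (pdec g).2.2.2.2] i))
    (by
      intro g h
      have hg : Fv (pdec g) = (g : GL4) := Fv_pdec g
      have hh : Fv (pdec h) = (h : GL4) := Fv_pdec h
      have hmul : Fv (pmul (pdec g) (pdec h)) = ((g * h : HeisenbergGroup) : GL4) := by
        rw [← Fv_mul, hg, hh]; rfl
      rw [pdec_spec hmul]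
      funext i
      fin_cases i <;>
        simp [pmul, Pi.mul_apply]
      )

lemma Phi_surj : Function.Surjective Phi := by
  intro v
  refine ⟨⟨Fv (0, v 0, v 1, v 2, v 3), mem_HG_iff.2 ⟨_, rfl⟩⟩, ?_⟩
  have : pdec ⟨Fv (0, v 0, v 1, v 2, v 3), mem_HG_iff.2 ⟨_, rfl⟩⟩ = (0, v 0, v 1, v 2, v 3) :=
    pdec_spec rfl
  show (fun i => Multiplicative.ofAdd (![_, _, _, _] i)) = v
  rw [this]
  funext i
  fin_cases i <;> rfl

lemma Phi_ker : Phi.ker = Subgroup.center HeisenbergGroup := by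
  ext g
  rw [MonoidHom.mem_ker, center_char]
  constructor
  · intro h
    have h0 := congrFun h 0
    have h1 := congrFun h 1
    have h2 := congrFun h 2
    have h3 := congrFun h 3
    simp only [Phi, MonoidHom.mk'_apply] at h0 h1 h2 h3
    have ha : (pdec g).2.1 = 0 := by simpa using h0
    have hb : (pdec g).2.2.1 = 0 := by simpa using h1
    have hc : (pdec g).2.2.2.1 = 0 := by simpa using h2
    have hd : (pdec g).2.2.2.2 = 0 := by simpa using h3
    have hval : (g : GL4) = Fv ((pdec g).1, 0, 0, 0, 0) := by
      rw [← Fv_pdec g]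
      congr 1
      exact Prod.ext rfl (Prod.ext ha.symm (Prod.ext hb.symm (Prod.ext hc.symm hd.symm))).symm
    rw [hval, Fv_diag]
    rcases ZMod2_cases (pdec g).1 with h | h <;> rw [h]
    · left; simp
    · right
      rw [show ((1 : ZMod 2)).val = 1 from rfl, pow_one]; rfl
  · intro h
    have : ∃ ε : ZMod 2, pdec g = (ε, 0, 0, 0, 0) := by
      rcases h with h | h
      · exact ⟨0, pdec_spec (by rw [Fv_diag]; simp [h])⟩
      · refine ⟨1, pdec_spec ?_⟩
        rw [Fv_diag, h, show ((1 : ZMod 2)).val = 1 from rfl, pow_one]; rfl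
    obtain ⟨ε, hε⟩ := this
    show (fun i => Multiplicative.ofAdd (![_, _, _, _] i)) = 1
    rw [hε]
    funext i
    fin_cases i <;> rfl

lemma quotient_iso :
    Nonempty ((HeisenbergGroup ⧸ Subgroup.center HeisenbergGroup) ≃*
      (Fin 4 → Multiplicative (ZMod 2))) :=
  ⟨(QuotientGroup.quotientMulEquivOfEq Phi_ker.symm).trans
    (QuotientGroup.quotientKerEquivOfSurjective Phi Phi_surj)⟩


/-- The Heisenberg group `H` has order `32`; its center is `{I, −I}`; its center coincides
with its commutator subgroup; and `H` modulo its center is isomorphic to `(ℤ/2)⁴`. -/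
theorem heisenberg_card_center_commutator_quotient :
    Nat.card HeisenbergGroup = 32 ∧
    (∀ g : HeisenbergGroup, g ∈ Subgroup.center HeisenbergGroup ↔
      ((g : Matrix.GeneralLinearGroup (Fin 4) ℂ) = 1 ∨
        (g : Matrix.GeneralLinearGroup (Fin 4) ℂ) = -1)) ∧
    Subgroup.center HeisenbergGroup = commutator HeisenbergGroup ∧
    Nonempty ((HeisenbergGroup ⧸ Subgroup.center HeisenbergGroup) ≃*
      (Fin 4 → Multiplicative (ZMod 2))) :=
  ⟨card_HG, center_char, center_eq_commutator, quotient_iso⟩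

end
end

section
/- There is no injective group homomorphism from the elementary abelian group (ℤ/2)⁴ into PGL(2, ℂ). (In other words, the group (ℤ/2)⁴ cannot act faithfully on a rational curve ℙ¹.) -/
/-- The projective general linear group `PGL(2, ℂ)`: the quotient of `GL(2, ℂ)` by its center. -/
abbrev PGL2C : Type :=
  Matrix.GeneralLinearGroup (Fin 2) ℂ ⧸ Subgroup.center (Matrix.GeneralLinearGroup (Fin 2) ℂ)

namespace NoEmbAux

open Matrix

abbrev GL2 := Matrix.GeneralLinearGroup (Fin 2) ℂ
abbrev M2 := Matrix (Fin 2) (Fin 2) ℂ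

/-- The center of `GL(2,ℂ)` consists exactly of the (invertible) scalar matrices. -/
lemma mem_center_iff {A : GL2} :
    A ∈ Subgroup.center GL2 ↔ ∃ c : ℂ, (A : M2) = c • (1 : M2) := by
  constructor
  · intro h
    have hc : ∀ t : TransvectionStruct (Fin 2) ℂ, Commute t.toMatrix (A : M2) := by
      intro t
      set U : GL2 := ⟨t.toMatrix, t.inv.toMatrix, t.mul_inv, t.inv_mul⟩ with hU
      have h1 : U * A = A * U := Subgroup.mem_center_iff.mp h U
      have h2 := congrArg Units.val h1
      simpa [Commute, SemiconjBy, hU] using h2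
    obtain ⟨r, hr⟩ := Matrix.mem_range_scalar_of_commute_transvectionStruct hc
    refine ⟨r, ?_⟩
    rw [← hr]
    ext i j
    simp [Matrix.scalar_apply, Matrix.smul_apply, Matrix.one_apply, Matrix.diagonal_apply]
  · rintro ⟨c, hc⟩
    rw [Subgroup.mem_center_iff]
    intro g
    apply Units.ext
    show (g : M2) * (A : M2) = (A : M2) * (g : M2)
    rw [hc, Matrix.mul_smul, Matrix.smul_mul, mul_one, one_mul]

/-- Cayley–Hamilton for 2×2 matrices. -/
lemma ch (m : M2) : m * m = trace m • m - det m • (1 : M2) := by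
  ext i j
  fin_cases i <;> fin_cases j <;>
    simp [Matrix.mul_apply, Fin.sum_univ_two, Matrix.trace_fin_two, Matrix.det_fin_two,
      Matrix.one_apply] <;> ring

/-- Polarization: two trace-zero 2×2 matrices satisfy `ab + ba = tr(ab) • 1`. -/
lemma pol (a b : M2) (ha : trace a = 0) (hb : trace b = 0) :
    a * b + b * a = trace (a * b) • (1 : M2) := by
  rw [Matrix.trace_fin_two] at ha hb
  have ha' : a 1 1 = - a 0 0 := by linear_combination ha
  have hb' : b 1 1 = - b 0 0 := by linear_combination hb
  ext i j
  fin_cases i <;> fin_cases j <;>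
    simp [Matrix.mul_apply, Fin.sum_univ_two, Matrix.trace_fin_two, Matrix.one_apply,
      ha', hb'] <;> ring

lemma smul_one_ne_zero_coeff {c : ℂ} {m : M2} (hm : IsUnit m) (h : m = c • (1 : M2)) :
    c ≠ 0 := by
  intro hc
  subst hc
  simp only [zero_smul] at h
  rw [h] at hm
  have := hm.ne_zero
  simp at this

/-- The final linear-algebra contradiction. -/
lemma key (m : Fin 4 → M2) (l : Fin 4 → ℂ) (hl : ∀ i, l i ≠ 0)
    (hsq : ∀ i, m i * m i = l i • (1 : M2))
    (htr : ∀ i j, i ≠ j → trace (m i * m j) = 0)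
    (htr0 : ∀ i, trace (m i) = 0) : False := by
  have hli : LinearIndependent ℂ (Fin.cons (1 : M2) m : Fin 5 → M2) := by
    rw [Fintype.linearIndependent_iff]
    intro g hg
    simp only [Fin.sum_univ_succ, Fin.cons_zero, Fin.cons_succ] at hg
    have hg' : g 0 • (1 : M2) + ∑ i : Fin 4, g i.succ • m i = 0 := by
      rw [← hg]; simp [Fin.sum_univ_succ]
    have hg0 : g 0 = 0 := by
      have h0 := congrArg Matrix.trace hg'
      simp only [Matrix.trace_add, Matrix.trace_sum, Matrix.trace_smul, Matrix.trace_one,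
        Matrix.trace_zero, htr0, smul_zero, mul_zero, Finset.sum_const_zero, add_zero, smul_eq_mul,
        Fintype.card_fin, Nat.cast_ofNat] at h0
      rcases mul_eq_zero.mp h0 with h | h
      · exact h
      · norm_num at h
    have hgs : ∀ j : Fin 4, g j.succ = 0 := by
      intro j
      have h0 := congrArg (fun X : M2 => Matrix.trace (X * m j)) hg'
      simp only [add_mul, Finset.sum_mul, Matrix.smul_mul, Matrix.trace_add, Matrix.trace_sum,
        Matrix.trace_smul, zero_mul, Matrix.trace_zero, one_mul, htr0, smul_zero,
        smul_eq_mul, mul_zero, zero_add] at h0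
      rw [Finset.sum_eq_single j (fun i _ hij => by rw [htr i j hij, mul_zero])
        (fun h => absurd (Finset.mem_univ j) h), hsq j, Matrix.trace_smul, Matrix.trace_one] at h0
      simp only [smul_eq_mul, Fintype.card_fin, Nat.cast_ofNat] at h0
      rcases mul_eq_zero.mp h0 with h | h
      · exact h
      · rcases mul_eq_zero.mp h with h' | h'
        · exact absurd h' (hl j)
        · norm_num at h'
    intro i
    refine Fin.cases hg0 hgs i
  have hcard := hli.fintype_card_le_finrank
  rw [Module.finrank_matrix] at hcard
  simp at hcard

end NoEmbAux

open NoEmbAux Matrix in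
/-- There is no injective group homomorphism from `(ℤ/2)⁴` into `PGL(2, ℂ)`:
the group `(ℤ/2)⁴` cannot act faithfully on `ℙ¹`. -/
theorem no_embedding_elementary_abelian_sixteen_into_PGL2 :
    ¬ ∃ φ : (Fin 4 → Multiplicative (ZMod 2)) →* PGL2C, Function.Injective φ := by
  rintro ⟨φ, hφ⟩
  set e : Fin 4 → (Fin 4 → Multiplicative (ZMod 2)) :=
    fun i => Pi.mulSingle i (Multiplicative.ofAdd 1) with he
  have hone : (Multiplicative.ofAdd (1 : ZMod 2)) * Multiplicative.ofAdd 1 = 1 := by decide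
  have hone' : (Multiplicative.ofAdd (1 : ZMod 2)) ≠ 1 := by decide
  have he_sq : ∀ i, e i * e i = 1 := by
    intro i
    show (Pi.mulSingle i (Multiplicative.ofAdd (1 : ZMod 2)) : Fin 4 → Multiplicative (ZMod 2))
      * Pi.mulSingle i (Multiplicative.ofAdd 1) = 1
    rw [← Pi.mulSingle_mul, hone, Pi.mulSingle_one]
  have he_ne : ∀ i, e i ≠ 1 := by
    intro i h
    have h2 : (Pi.mulSingle i (Multiplicative.ofAdd (1 : ZMod 2)) :
        Fin 4 → Multiplicative (ZMod 2)) i = (1 : Fin 4 → Multiplicative (ZMod 2)) i :=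
      congrFun h i
    rw [Pi.mulSingle_eq_same, Pi.one_apply] at h2
    exact hone' h2
  have he_ne' : ∀ i j, i ≠ j → e i ≠ e j := by
    intro i j hij h
    have h2 : (Pi.mulSingle i (Multiplicative.ofAdd (1 : ZMod 2)) :
        Fin 4 → Multiplicative (ZMod 2)) i
        = (Pi.mulSingle j (Multiplicative.ofAdd (1 : ZMod 2)) :
        Fin 4 → Multiplicative (ZMod 2)) i := congrFun h i
    rw [Pi.mulSingle_eq_same, Pi.mulSingle_eq_of_ne hij] at h2
    exact hone' h2
  -- lift each φ (e i) to GL₂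
  have hlift : ∀ i, ∃ A : GL2, (QuotientGroup.mk A : PGL2C) = φ (e i) :=
    fun i => QuotientGroup.mk_surjective (φ (e i))
  choose A hA using hlift
  set a : Fin 4 → M2 := fun i => ((A i : GL2) : M2) with ha
  -- each φ(e i) is a nontrivial involution
  have hsq' : ∀ i, φ (e i) * φ (e i) = 1 := by
    intro i; rw [← _root_.map_mul, he_sq, _root_.map_one]
  have hne1 : ∀ i, φ (e i) ≠ 1 := by
    intro i h
    exact he_ne i (hφ (h.trans (_root_.map_one φ).symm))
  have hneij : ∀ i j, i ≠ j → φ (e i) ≠ φ (e j) := by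
    intro i j hij h
    exact he_ne' i j hij (hφ h)
  -- matrices square to nonzero scalars
  have hsqmat : ∀ i, ∃ l : ℂ, a i * a i = l • (1 : M2) ∧ l ≠ 0 := by
    intro i
    have h1 : (QuotientGroup.mk (A i * A i) : PGL2C) = 1 := by
      rw [QuotientGroup.mk_mul, hA, hsq']
    have h2 : A i * A i ∈ Subgroup.center GL2 := (QuotientGroup.eq_one_iff _).mp h1
    obtain ⟨c, hc⟩ := mem_center_iff.mp h2
    have hc' : a i * a i = c • (1 : M2) := hc
    have hu : IsUnit (a i * a i) := by
      have : a i * a i = ((A i * A i : GL2) : M2) := rfl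
      rw [this]
      exact Units.isUnit _
    exact ⟨c, hc', smul_one_ne_zero_coeff hu hc'⟩
  choose l hl hlne using hsqmat
  -- scalar multiples give equal classes
  have hscalar_eq : ∀ i j, (∃ d : ℂ, a j = d • a i) → φ (e i) = φ (e j) := by
    intro i j ⟨d, hd⟩
    have hmem : (A i)⁻¹ * A j ∈ Subgroup.center GL2 := by
      apply mem_center_iff.mpr
      refine ⟨d, ?_⟩
      have h1 : (((A i)⁻¹ * A j : GL2) : M2) = (((A i)⁻¹ : GL2) : M2) * a j := rfl
      rw [h1, hd, Matrix.mul_smul]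
      have h2 : (((A i)⁻¹ : GL2) : M2) * a i = 1 := Units.inv_mul _
      rw [h2]
    rw [← hA, ← hA]
    exact QuotientGroup.eq.mpr hmem
  -- traces vanish
  have htr0 : ∀ i, trace (a i) = 0 := by
    intro i
    by_contra htr
    -- then a i is scalar, so φ (e i) = 1
    have hch := ch (a i)
    rw [hl i] at hch
    have hai : a i = ((trace (a i))⁻¹ * (l i + det (a i))) • (1 : M2) := by
      have h1 : trace (a i) • a i = (l i + det (a i)) • (1 : M2) := by
        rw [add_smul, hch]
        abel
      have h3 := congrArg (fun X : M2 => (trace (a i))⁻¹ • X) h1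
      simp only [smul_smul, inv_mul_cancel₀ htr, one_smul] at h3
      exact h3
    have hmem : A i ∈ Subgroup.center GL2 := mem_center_iff.mpr ⟨_, hai⟩
    exact hne1 i (by rw [← hA]; exact (QuotientGroup.eq_one_iff _).mpr hmem)
  -- cross traces vanish
  have htr : ∀ i j, i ≠ j → trace (a i * a j) = 0 := by
    intro i j hij
    -- commuting in the quotient
    have hcomm : (QuotientGroup.mk (A i * A j) : PGL2C) = QuotientGroup.mk (A j * A i) := by
      rw [QuotientGroup.mk_mul, QuotientGroup.mk_mul, hA, hA, ← _root_.map_mul, ← _root_.map_mul,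
        mul_comm (e i) (e j)]
    have hmem : (A i * A j)⁻¹ * (A j * A i) ∈ Subgroup.center GL2 := QuotientGroup.eq.mp hcomm
    obtain ⟨c, hc⟩ := mem_center_iff.mp hmem
    have h1 : ((A i * A j : GL2) : M2) * (((A i * A j)⁻¹ * (A j * A i) : GL2) : M2)
        = a j * a i := by
      rw [← Units.val_mul, ← mul_assoc, mul_inv_cancel, one_mul]; rfl
    rw [hc] at h1
    have hrel : a j * a i = c • (a i * a j) := by
      rw [← h1, Matrix.mul_smul, mul_one]; rfl
    have hpol := pol (a i) (a j) (htr0 i) (htr0 j)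
    rw [hrel] at hpol
    by_cases h1c : (1 : ℂ) + c = 0
    · -- anticommuting case: tr = 0
      have h2 : ((1 : ℂ) + c) • (a i * a j) = trace (a i * a j) • (1 : M2) := by
        rw [add_smul, one_smul]; exact hpol
      rw [h1c, zero_smul] at h2
      have h3 := congrFun (congrFun h2.symm 0) 0
      simpa [Matrix.smul_apply, Matrix.one_apply] using h3
    · -- commuting case: a j is a scalar multiple of a i, contradiction
      exfalso
      have h2 : a i * a j = (((1 : ℂ) + c)⁻¹ * trace (a i * a j)) • (1 : M2) := by
        have h3 : ((1 : ℂ) + c) • (a i * a j) = trace (a i * a j) • (1 : M2) := by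
          rw [add_smul, one_smul]; exact hpol
        have h4 := congrArg (fun X : M2 => ((1 : ℂ) + c)⁻¹ • X) h3
        simp only [smul_smul, inv_mul_cancel₀ h1c, one_smul] at h4
        exact h4
      set s : ℂ := ((1 : ℂ) + c)⁻¹ * trace (a i * a j) with hs
      have hd : a j = ((l i)⁻¹ * s) • a i := by
        have h4 : a i * (a i * a j) = l i • a j := by
          rw [← mul_assoc, hl i, Matrix.smul_mul, one_mul]
        rw [h2, Matrix.mul_smul, mul_one] at h4
        have h5 := congrArg (fun X : M2 => (l i)⁻¹ • X) h4.symm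
        simp only [smul_smul, inv_mul_cancel₀ (hlne i), one_smul] at h5
        exact h5
      exact hneij i j hij (hscalar_eq i j ⟨(l i)⁻¹ * s, hd⟩)
  -- final contradiction
  exact key a l hlne hl htr htr0
end

section
/- Every subgroup Γ of A₄ × A₄ of order 9 is isomorphic to (ℤ/3) × (ℤ/3), and Γ is of product type, i.e. Γ equals the product subgroup π₁(Γ) × π₂(Γ) of its images under the two projection homomorphisms. -/
/-- The alternating group `A₄` on four letters. -/
abbrev A4 : Type := alternatingGroup (Fin 4)

lemma A4_card : Nat.card A4 = 12 := by
  have := two_mul_card_alternatingGroup (α := Fin 4)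
  rw [Fintype.card_perm, Fintype.card_fin] at this
  norm_num [Nat.factorial] at this
  rw [Nat.card_eq_fintype_card]
  rw [show Fintype.card A4 = Fintype.card {x : Equiv.Perm (Fin 4) // Equiv.Perm.sign x = 1} from
    Fintype.card_congr (Equiv.refl _)]
  omega

/-- Every subgroup of `A₄ × A₄` of order `9` is isomorphic to `(ℤ/3) × (ℤ/3)` and is of
product type: it equals the product of its images under the two projections. -/
theorem A4_prod_A4_subgroup_order_nine (Γ : Subgroup (A4 × A4)) (h : Nat.card Γ = 9) :
    Nonempty (Γ ≃* (Multiplicative (ZMod 3) × Multiplicative (ZMod 3))) ∧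
    Γ = (Γ.map (MonoidHom.fst A4 A4)).prod (Γ.map (MonoidHom.snd A4 A4)) := by
  haveI : Fact (Nat.Prime 3) := ⟨by norm_num⟩
  set P := Γ.map (MonoidHom.fst A4 A4) with hPdef
  set Q := Γ.map (MonoidHom.snd A4 A4) with hQdef
  have hle : Γ ≤ P.prod Q := fun g hg => ⟨⟨g, hg, rfl⟩, ⟨g, hg, rfl⟩⟩
  have hPd9 : Nat.card P ∣ 9 :=
    h ▸ Subgroup.card_dvd_of_surjective _ ((MonoidHom.fst A4 A4).subgroupMap_surjective Γ)
  have hQd9 : Nat.card Q ∣ 9 :=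
    h ▸ Subgroup.card_dvd_of_surjective _ ((MonoidHom.snd A4 A4).subgroupMap_surjective Γ)
  have hPd3 : Nat.card P ∣ 3 := by
    have h12 : Nat.card P ∣ 12 := A4_card ▸ P.card_subgroup_dvd_card
    have := Nat.dvd_gcd hPd9 h12
    norm_num at this
    exact this
  have hQd3 : Nat.card Q ∣ 3 := by
    have h12 : Nat.card Q ∣ 12 := A4_card ▸ Q.card_subgroup_dvd_card
    have := Nat.dvd_gcd hQd9 h12
    norm_num at this
    exact this
  have hcardprod : Nat.card (P.prod Q) = Nat.card P * Nat.card Q := by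
    rw [Nat.card_congr (Subgroup.prodEquiv P Q).toEquiv, Nat.card_prod]
  have hPle : Nat.card P ≤ 3 := Nat.le_of_dvd (by norm_num) hPd3
  have hQle : Nat.card Q ≤ 3 := Nat.le_of_dvd (by norm_num) hQd3
  have heq : Γ = P.prod Q := by
    refine Subgroup.eq_of_le_of_card_ge hle ?_
    rw [hcardprod, h]
    exact le_trans (Nat.mul_le_mul hPle hQle) (by norm_num)
  have hmul : Nat.card P * Nat.card Q = 9 := by
    rw [← hcardprod, ← heq, h]
  have hP3 : Nat.card P = 3 := by
    rcases (Nat.dvd_prime (by norm_num)).mp hPd3 with h1 | h1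
    · rw [h1, one_mul] at hmul; omega
    · exact h1
  have hQ3 : Nat.card Q = 3 := by
    rcases (Nat.dvd_prime (by norm_num)).mp hQd3 with h1 | h1
    · rw [h1, mul_one] at hmul; omega
    · exact h1
  refine ⟨?_, heq⟩
  haveI : IsCyclic P := isCyclic_of_prime_card hP3
  haveI : IsCyclic Q := isCyclic_of_prime_card hQ3
  have hz : Nat.card (Multiplicative (ZMod 3)) = 3 := by
    rw [Nat.card_eq_fintype_card]; rfl
  have eP : P ≃* Multiplicative (ZMod 3) := mulEquivOfCyclicCardEq (by rw [hP3, hz])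
  have eQ : Q ≃* Multiplicative (ZMod 3) := mulEquivOfCyclicCardEq (by rw [hQ3, hz])
  exact ⟨((MulEquiv.subgroupCongr heq).trans (Subgroup.prodEquiv P Q)).trans
    (MulEquiv.prodCongr eP eQ)⟩
end

section
/- Every subgroup Γ of A₄ × A₄ of order 6 is cyclic (isomorphic to ℤ/6 ≅ ℤ/2 × ℤ/3) and is of product type, i.e. Γ equals the product subgroup π₁(Γ) × π₂(Γ) of its projections. Moreover, there are exactly two conjugacy classes of subgroups of order 6 in A₄ × A₄. -/
/-- Two subgroups of a group are conjugate if one is mapped onto the other by conjugation by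
some group element. -/
def SubgroupsConj {G : Type*} [Group G] (H K : Subgroup G) : Prop :=
  ∃ g : G, H.map (MulAut.conj g).toMonoidHom = K

open Subgroup

/-! ### Decidable facts about `A₄` -/

private lemma A4_conj2 : ∀ x y : A4, x ^ 2 = 1 → x ≠ 1 → y ^ 2 = 1 → y ≠ 1 →
    ∃ g : A4, g * x * g⁻¹ = y := by decide

private lemma A4_conj3 : ∀ x y : A4, x ^ 3 = 1 → x ≠ 1 → y ^ 3 = 1 → y ≠ 1 →
    ∃ g : A4, g * x * g⁻¹ = y ∨ g * x * g⁻¹ = y * y := by decide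

private lemma A4_nonormal : ∀ x y : A4, x ^ 3 = 1 → x ≠ 1 → y ^ 2 = 1 → y ≠ 1 →
    y * x * y⁻¹ ≠ x ∧ y * x * y⁻¹ ≠ x * x := by decide

/-! ### `A₄` has no subgroup of order `6` -/

private lemma no_order_six (P : Subgroup A4) : Nat.card P ≠ 6 := by
  intro h
  obtain ⟨x, hx⟩ := exists_prime_orderOf_dvd_card' (G := P) 3 (by rw [h]; norm_num)
  obtain ⟨y, hy⟩ := exists_prime_orderOf_dvd_card' (G := P) 2 (by rw [h]; norm_num)
  have hx3 : x ^ 3 = 1 := by rw [← hx]; exact pow_orderOf_eq_one x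
  have hx1 : x ≠ 1 := by intro e; rw [e, orderOf_one] at hx; norm_num at hx
  have hy2 : y ^ 2 = 1 := by rw [← hy]; exact pow_orderOf_eq_one y
  have hy1 : y ≠ 1 := by intro e; rw [e, orderOf_one] at hy; norm_num at hy
  set Z : Subgroup P := Subgroup.zpowers x with hZ
  have hcardZ : Nat.card Z = 3 := by rw [Nat.card_zpowers, hx]
  have hidx : Z.index = 2 := by
    have h2 := Z.index_mul_card
    rw [hcardZ, h] at h2
    omega
  have hyZ : y ∉ Z := by
    intro hmem
    have hdvd : orderOf (⟨y, hmem⟩ : Z) ∣ 3 := hcardZ ▸ orderOf_dvd_natCard _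
    rw [Subgroup.orderOf_mk, hy] at hdvd
    norm_num at hdvd
  have hxZ : x ∈ Z := Subgroup.mem_zpowers x
  have h1 : y * x ∉ Z := by
    rw [Subgroup.mul_mem_iff_of_index_two hidx]
    tauto
  have h2 : y * x * y ∈ Z := by
    rw [Subgroup.mul_mem_iff_of_index_two hidx]
    exact iff_of_false h1 hyZ
  obtain ⟨k, hk⟩ := Subgroup.mem_zpowers_iff.mp h2
  have hmod := zpow_mod_orderOf x k
  rw [hx] at hmod
  have hk' : x ^ (k % 3) = y * x * y := by
    rw [show ((3 : ℕ) : ℤ) = 3 from rfl] at hmod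
    rw [hmod, hk]
  -- pass to A4
  have hyy : y⁻¹ = y := inv_eq_of_mul_eq_one_right (by rw [← pow_two]; exact hy2)
  have hr : k % 3 = 0 ∨ k % 3 = 1 ∨ k % 3 = 2 := by omega
  have hx30 : (x : A4) ^ 3 = 1 := by
    rw [← Subgroup.coe_pow, hx3, Subgroup.coe_one]
  have hx10 : (x : A4) ≠ 1 := by
    intro e
    exact hx1 (Subtype.ext (by rw [e]; rfl))
  have hy20 : (y : A4) ^ 2 = 1 := by
    rw [← Subgroup.coe_pow, hy2, Subgroup.coe_one]
  have hy10 : (y : A4) ≠ 1 := by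
    intro e
    exact hy1 (Subtype.ext (by rw [e]; rfl))
  obtain ⟨hn1, hn2⟩ := A4_nonormal (x : A4) (y : A4) hx30 hx10 hy20 hy10
  have hyy0 : (y : A4)⁻¹ = (y : A4) := by
    rw [← Subgroup.coe_inv, hyy]
  rcases hr with hr | hr | hr
  · rw [hr, zpow_zero] at hk'
    have : x = 1 := by
      have e : y * (1 : P) * y = y * (y * x * y) * y := by rw [← hk']
      rw [mul_one] at e
      calc x = (y * y) * x * (y * y) := by rw [← pow_two, hy2, one_mul, mul_one]
        _ = y * (y * x * y) * y := by group
        _ = y * y := by rw [← e]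
        _ = 1 := by rw [← pow_two, hy2]
    exact hx1 this
  · rw [hr, zpow_one] at hk'
    apply hn1
    rw [hyy0]
    exact_mod_cast congrArg (Subtype.val) hk'.symm
  · rw [hr, show (2 : ℤ) = 1 + 1 from rfl, zpow_add, zpow_one] at hk'
    apply hn2
    rw [hyy0]
    exact_mod_cast congrArg (Subtype.val) hk'.symm

/-! ### Projection analysis -/

private lemma card_arith (p q k k' : ℕ) (hpk : p * k = 6) (hqk' : q * k' = 6)
    (hkq : k ∣ q) (hk'p : k' ∣ p) (hp : p ≠ 6) (hq : q ≠ 6) :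
    (p = 2 ∧ q = 3 ∧ k = 3 ∧ k' = 2) ∨ (p = 3 ∧ q = 2 ∧ k = 2 ∧ k' = 3) := by
  have hppos : 0 < p := Nat.pos_of_ne_zero (by rintro rfl; simp at hpk)
  have hqpos : 0 < q := Nat.pos_of_ne_zero (by rintro rfl; simp at hqk')
  have hp6 : p ∣ 6 := ⟨k, hpk.symm⟩
  have hq6 : q ∣ 6 := ⟨k', hqk'.symm⟩
  have hple : p ≤ 6 := Nat.le_of_dvd (by norm_num) hp6
  have hqle : q ≤ 6 := Nat.le_of_dvd (by norm_num) hq6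
  have hpv : p = 1 ∨ p = 2 ∨ p = 3 := by interval_cases p <;> omega
  rcases hpv with rfl | rfl | rfl
  · have hk6 : k = 6 := by omega
    subst hk6
    interval_cases q <;> omega
  · have hk3 : k = 3 := by omega
    subst hk3
    interval_cases q <;> omega
  · have hk2 : k = 2 := by omega
    subst hk2
    interval_cases q <;> omega

private lemma proj_aux (Γ : Subgroup (A4 × A4)) (h : Nat.card Γ = 6)
    (f g : (A4 × A4) →* A4) (hfg : ∀ z : A4 × A4, f z = 1 → g z = 1 → z = 1) :
    ∃ k : ℕ, Nat.card (Γ.map f) * k = 6 ∧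
      ∃ K : Subgroup A4, K ≤ Γ.map g ∧ Nat.card K = k ∧
        (∀ b ∈ K, ∃ z ∈ Γ, f z = 1 ∧ g z = b) := by
  set r : Γ →* A4 := f.comp Γ.subtype with hr
  have hrange : r.range = Γ.map f := by
    ext a
    constructor
    · rintro ⟨u, rfl⟩
      exact ⟨u.1, u.2, rfl⟩
    · rintro ⟨z, hz, rfl⟩
      exact ⟨⟨z, hz⟩, rfl⟩
  have hcard : Nat.card (Γ.map f) * Nat.card r.ker = 6 := by
    have h1 := Subgroup.card_eq_card_quotient_mul_card_subgroup r.ker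
    have h2 : Nat.card (Γ ⧸ r.ker) = Nat.card (Γ.map f) := by
      rw [← hrange]
      exact Nat.card_congr (QuotientGroup.quotientKerEquivRange r).toEquiv
    rw [h, h2] at h1
    exact h1.symm
  set e : r.ker →* A4 := g.comp (Γ.subtype.comp r.ker.subtype) with he
  have heinj : Function.Injective e := by
    intro z w hzw
    have hz1 : ∀ u : r.ker, f ((u : Γ) : A4 × A4) = 1 := fun u => u.2
    -- reduce to showing values equal
    have : ((z : Γ) : A4 × A4) * (((w : Γ) : A4 × A4))⁻¹ = 1 := by
      apply hfg
      · rw [map_mul, map_inv, hz1 z, hz1 w, inv_one, mul_one]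
      · have : g ((z : Γ) : A4 × A4) = g ((w : Γ) : A4 × A4) := hzw
        rw [map_mul, map_inv, this, mul_inv_cancel]
    have hval : ((z : Γ) : A4 × A4) = ((w : Γ) : A4 × A4) := by
      rwa [mul_inv_eq_one] at this
    exact Subtype.ext (Subtype.ext hval)
  refine ⟨Nat.card r.ker, hcard, e.range, ?_, ?_, ?_⟩
  · rintro b ⟨z, rfl⟩
    exact ⟨((z : Γ) : A4 × A4), (z : Γ).2, rfl⟩
  · exact (Nat.card_congr (MonoidHom.ofInjective heinj).toEquiv).symm
  · rintro b ⟨z, rfl⟩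
    exact ⟨((z : Γ) : A4 × A4), (z : Γ).2, z.2, rfl⟩

private lemma product_structure (Γ : Subgroup (A4 × A4)) (h : Nat.card Γ = 6) :
    Γ = (Γ.map (MonoidHom.fst A4 A4)).prod (Γ.map (MonoidHom.snd A4 A4)) ∧
    ((Nat.card (Γ.map (MonoidHom.fst A4 A4)) = 2 ∧
        Nat.card (Γ.map (MonoidHom.snd A4 A4)) = 3) ∨
      (Nat.card (Γ.map (MonoidHom.fst A4 A4)) = 3 ∧
        Nat.card (Γ.map (MonoidHom.snd A4 A4)) = 2)) := by
  obtain ⟨k, hpk, K, hKQ, hKcard, hKmem⟩ :=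
    proj_aux Γ h (MonoidHom.fst A4 A4) (MonoidHom.snd A4 A4)
      (fun z h1 h2 => Prod.ext h1 h2)
  obtain ⟨k', hqk', K', hK'P, hK'card, hK'mem⟩ :=
    proj_aux Γ h (MonoidHom.snd A4 A4) (MonoidHom.fst A4 A4)
      (fun z h1 h2 => Prod.ext h2 h1)
  have hkq : k ∣ Nat.card (Γ.map (MonoidHom.snd A4 A4)) :=
    hKcard ▸ Subgroup.card_dvd_of_le hKQ
  have hk'p : k' ∣ Nat.card (Γ.map (MonoidHom.fst A4 A4)) :=
    hK'card ▸ Subgroup.card_dvd_of_le hK'P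
  have hcases := card_arith _ _ k k' hpk hqk' hkq hk'p
    (no_order_six _) (no_order_six _)
  set P := Γ.map (MonoidHom.fst A4 A4) with hP
  set Q := Γ.map (MonoidHom.snd A4 A4) with hQ
  have hKeq : K = Q := by
    apply Subgroup.eq_of_le_of_card_ge hKQ
    rcases hcases with ⟨_, h1, h2, _⟩ | ⟨_, h1, h2, _⟩ <;> omega
  have hK'eq : K' = P := by
    apply Subgroup.eq_of_le_of_card_ge hK'P
    rcases hcases with ⟨h1, _, _, h2⟩ | ⟨h1, _, _, h2⟩ <;> omega
  constructor
  · apply le_antisymm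
    · intro z hz
      exact ⟨⟨z, hz, rfl⟩, ⟨z, hz, rfl⟩⟩
    · rintro ⟨a, b⟩ ⟨ha, hb⟩
      obtain ⟨z1, hz1, hz1f, hz1g⟩ := hK'mem a (hK'eq ▸ ha)
      obtain ⟨z2, hz2, hz2f, hz2g⟩ := hKmem b (hKeq ▸ hb)
      have hz1' : z1 = (a, 1) := Prod.ext hz1g hz1f
      have hz2' : z2 = (1, b) := Prod.ext hz2f hz2g
      have := Γ.mul_mem hz1 hz2
      rw [hz1', hz2'] at this
      simpa using this
  · rcases hcases with ⟨h1, h2, _⟩ | ⟨h1, h2, _⟩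
    · exact Or.inl ⟨h1, h2⟩
    · exact Or.inr ⟨h1, h2⟩

/-! ### Generators of prime-order subgroups -/

private lemma exists_gen {p : ℕ} [Fact p.Prime] (P : Subgroup A4) (h : Nat.card P = p) :
    ∃ a : A4, a ∈ P ∧ orderOf a = p ∧ P = Subgroup.zpowers a := by
  have hc : IsCyclic P := isCyclic_of_prime_card h
  obtain ⟨g, hg⟩ := hc.exists_generator
  have ho : orderOf g = p := by rw [orderOf_eq_card_of_forall_mem_zpowers hg, h]
  have hcoe : orderOf (g : A4) = p := by rw [Subgroup.orderOf_coe, ho]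
  refine ⟨g, g.2, hcoe, ?_⟩
  have hle : Subgroup.zpowers (g : A4) ≤ P := Subgroup.zpowers_le.mpr g.2
  refine (Subgroup.eq_of_le_of_card_ge hle ?_).symm
  rw [Nat.card_zpowers, hcoe, h]

/-! ### Mapping lemmas for conjugation and products -/

private lemma map_fst_prod (H K : Subgroup A4) :
    (H.prod K).map (MonoidHom.fst A4 A4) = H := by
  ext a
  simp only [Subgroup.mem_map, Subgroup.mem_prod]
  constructor
  · rintro ⟨z, ⟨h1, _⟩, rfl⟩
    exact h1
  · exact fun ha => ⟨(a, 1), ⟨ha, K.one_mem⟩, rfl⟩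

private lemma map_conj_prod (g : A4 × A4) (H K : Subgroup A4) :
    (H.prod K).map (MulAut.conj g).toMonoidHom =
      (H.map (MulAut.conj g.1).toMonoidHom).prod (K.map (MulAut.conj g.2).toMonoidHom) := by
  ext z
  simp only [Subgroup.mem_map, Subgroup.mem_prod]
  constructor
  · rintro ⟨w, ⟨h1, h2⟩, rfl⟩
    exact ⟨⟨w.1, h1, rfl⟩, ⟨w.2, h2, rfl⟩⟩
  · rintro ⟨⟨a, ha, ha'⟩, ⟨b, hb, hb'⟩⟩
    exact ⟨(a, b), ⟨ha, hb⟩, Prod.ext ha' hb'⟩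

private lemma map_conj_fst (g : A4 × A4) (Γ : Subgroup (A4 × A4)) :
    (Γ.map (MulAut.conj g).toMonoidHom).map (MonoidHom.fst A4 A4)
      = (Γ.map (MonoidHom.fst A4 A4)).map (MulAut.conj g.1).toMonoidHom := by
  rw [Subgroup.map_map, Subgroup.map_map]
  congr 1

/-! ### The two reference subgroups -/

private def σ : A4 := ⟨Equiv.swap 0 1 * Equiv.swap 2 3, by
  rw [Equiv.Perm.mem_alternatingGroup]; decide⟩

private def τ : A4 := ⟨Equiv.swap 0 1 * Equiv.swap 1 2, by
  rw [Equiv.Perm.mem_alternatingGroup]; decide⟩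

private lemma σ_order : orderOf σ = 2 := orderOf_eq_prime (by decide) (by decide)

private lemma τ_order : orderOf τ = 3 := orderOf_eq_prime (by decide) (by decide)

private lemma card_prod_sub (H K : Subgroup A4) :
    Nat.card (H.prod K) = Nat.card H * Nat.card K := by
  rw [Nat.card_congr (Subgroup.prodEquiv H K).toEquiv, Nat.card_prod]

/-! ### Main theorem -/

/-- Every subgroup of `A₄ × A₄` of order `6` is cyclic (isomorphic to `ℤ/6 ≅ ℤ/2 × ℤ/3`) and is
of product type (it equals the product of its images under the two projections); moreover there
are exactly two conjugacy classes of subgroups of order `6` in `A₄ × A₄`. -/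
theorem A4_prod_A4_subgroups_order_six :
    (∀ Γ : Subgroup (A4 × A4), Nat.card Γ = 6 →
      Nonempty (Γ ≃* Multiplicative (ZMod 6)) ∧
      Γ = (Γ.map (MonoidHom.fst A4 A4)).prod (Γ.map (MonoidHom.snd A4 A4))) ∧
    (∃ Γ₁ Γ₂ : Subgroup (A4 × A4), Nat.card Γ₁ = 6 ∧ Nat.card Γ₂ = 6 ∧
      ¬ SubgroupsConj Γ₁ Γ₂ ∧
      (∀ Γ : Subgroup (A4 × A4), Nat.card Γ = 6 →
        SubgroupsConj Γ Γ₁ ∨ SubgroupsConj Γ Γ₂)) := by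
  have hσ2 : σ ^ 2 = 1 := by decide
  have hσ1 : σ ≠ 1 := by decide
  have hτ3 : τ ^ 3 = 1 := by decide
  have hτ1 : τ ≠ 1 := by decide
  -- a general lemma: every Γ of order 6 is a product of cyclic groups of order 2 and 3
  have key : ∀ Γ : Subgroup (A4 × A4), Nat.card Γ = 6 →
      ∃ x y : A4, orderOf x = 2 ∧ orderOf y = 3 ∧
        (Γ = (Subgroup.zpowers x).prod (Subgroup.zpowers y) ∨
         Γ = (Subgroup.zpowers y).prod (Subgroup.zpowers x)) := by
    intro Γ hΓ
    obtain ⟨heq, hcards⟩ := product_structure Γ hΓ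
    rcases hcards with ⟨h1, h2⟩ | ⟨h1, h2⟩
    · obtain ⟨x, hxm, hxo, hxeq⟩ := exists_gen (p := 2) _ h1
      obtain ⟨y, hym, hyo, hyeq⟩ := exists_gen (p := 3) _ h2
      exact ⟨x, y, hxo, hyo, Or.inl (by rw [heq, hxeq, hyeq])⟩
    · obtain ⟨y, hym, hyo, hyeq⟩ := exists_gen (p := 3) _ h1
      obtain ⟨x, hxm, hxo, hxeq⟩ := exists_gen (p := 2) _ h2
      exact ⟨x, y, hxo, hyo, Or.inr (by rw [heq, hyeq, hxeq])⟩
  constructor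
  · -- cyclic and product type
    intro Γ hΓ
    obtain ⟨heq, _⟩ := product_structure Γ hΓ
    refine ⟨?_, heq⟩
    obtain ⟨x, y, hxo, hyo, hcase⟩ := key Γ hΓ
    have hmem : ∃ z : A4 × A4, z ∈ Γ ∧ orderOf z = 6 := by
      rcases hcase with hc | hc
      · refine ⟨(x, y), ?_, ?_⟩
        · rw [hc]
          exact ⟨Subgroup.mem_zpowers x, Subgroup.mem_zpowers y⟩
        · rw [Prod.orderOf_mk, hxo, hyo]; rfl
      · refine ⟨(y, x), ?_, ?_⟩
        · rw [hc]
          exact ⟨Subgroup.mem_zpowers y, Subgroup.mem_zpowers x⟩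
        · rw [Prod.orderOf_mk, hxo, hyo]; rfl
    obtain ⟨z, hz, hzo⟩ := hmem
    have hcyc : IsCyclic Γ := by
      apply isCyclic_of_orderOf_eq_card (⟨z, hz⟩ : Γ)
      rw [Subgroup.orderOf_mk, hzo, hΓ]
    rw [← hΓ]
    exact ⟨(zmodCyclicMulEquiv hcyc).symm⟩
  · -- exactly two conjugacy classes
    refine ⟨(Subgroup.zpowers σ).prod (Subgroup.zpowers τ),
           (Subgroup.zpowers τ).prod (Subgroup.zpowers σ), ?_, ?_, ?_, ?_⟩
    · rw [card_prod_sub, Nat.card_zpowers, Nat.card_zpowers, σ_order, τ_order]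
    · rw [card_prod_sub, Nat.card_zpowers, Nat.card_zpowers, σ_order, τ_order]
    · rintro ⟨g, hg⟩
      have h1 := congrArg (Subgroup.map (MonoidHom.fst A4 A4)) hg
      rw [map_conj_fst, map_fst_prod, map_fst_prod, MonoidHom.map_zpowers] at h1
      have h2 : Nat.card (Subgroup.zpowers ((MulAut.conj g.1).toMonoidHom σ))
          = Nat.card (Subgroup.zpowers τ) := by rw [h1]
      rw [Nat.card_zpowers, Nat.card_zpowers, τ_order] at h2
      have h3 : orderOf ((MulAut.conj g.1).toMonoidHom σ) = 2 := by
        rw [orderOf_injective _ (MulAut.conj g.1).injective, σ_order]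
      rw [h3] at h2
      norm_num at h2
    · intro Γ hΓ
      obtain ⟨x, y, hxo, hyo, hcase⟩ := key Γ hΓ
      have hx2 : x ^ 2 = 1 := by rw [← hxo]; exact pow_orderOf_eq_one x
      have hx1 : x ≠ 1 := by intro e; rw [e, orderOf_one] at hxo; norm_num at hxo
      have hy3 : y ^ 3 = 1 := by rw [← hyo]; exact pow_orderOf_eq_one y
      have hy1 : y ≠ 1 := by intro e; rw [e, orderOf_one] at hyo; norm_num at hyo
      obtain ⟨g1, hg1⟩ := A4_conj2 x σ hx2 hx1 hσ2 hσ1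
      obtain ⟨g2, hg2⟩ := A4_conj3 y τ hy3 hy1 hτ3 hτ1
      have e1 : (MulAut.conj g1).toMonoidHom x = σ := hg1
      have e2 : Subgroup.zpowers ((MulAut.conj g2).toMonoidHom y) = Subgroup.zpowers τ := by
        rcases hg2 with hg2 | hg2
        · rw [show (MulAut.conj g2).toMonoidHom y = τ from hg2]
        · rw [show (MulAut.conj g2).toMonoidHom y = τ * τ from hg2,
              show τ * τ = τ⁻¹ from by decide, Subgroup.zpowers_inv]
      rcases hcase with hc | hc
      · left
        refine ⟨(g1, g2), ?_⟩
        rw [hc, map_conj_prod, MonoidHom.map_zpowers, MonoidHom.map_zpowers]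
        rw [show ((g1, g2) : A4 × A4).1 = g1 from rfl, show ((g1, g2) : A4 × A4).2 = g2 from rfl,
            e1, e2]
      · right
        refine ⟨(g2, g1), ?_⟩
        rw [hc, map_conj_prod, MonoidHom.map_zpowers, MonoidHom.map_zpowers]
        rw [show ((g2, g1) : A4 × A4).1 = g2 from rfl, show ((g2, g1) : A4 × A4).2 = g1 from rfl,
            e1, e2]
end

section
/- Let K be a field with 16 elements and let ζ ∈ Kˣ be an element of multiplicative order 5. Then every additive subgroup of K that is closed under multiplication by ζ is either the zero subgroup or all of K. (This expresses that the order-5 subgroup of Kˣ acts irreducibly on the elementary abelian group (K, +) ≅ (ℤ/2)⁴.) -/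
/-- Let `K` be a field with `16` elements and let `ζ ∈ Kˣ` have multiplicative order `5`. Then
every additive subgroup of `K` closed under multiplication by `ζ` is either zero or all of `K`:
the order-5 subgroup of `Kˣ` acts irreducibly on `(K, +) ≅ (ℤ/2)⁴`. -/
theorem order_five_unit_acts_irreducibly_on_field_sixteen
    (K : Type*) [Field K] [Fintype K] (hK : Fintype.card K = 16)
    (ζ : Kˣ) (hζ : orderOf ζ = 5) (A : AddSubgroup K)
    (hA : ∀ x ∈ A, (ζ : K) * x ∈ A) :
    A = ⊥ ∨ A = ⊤ := by
  classical
  -- the stabilizer subring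
  set S : Subring K :=
    { carrier := {c : K | ∀ x ∈ A, c * x ∈ A}
      one_mem' := by intro x hx; simpa using hx
      mul_mem' := by intro c d hc hd x hx; rw [mul_assoc]; exact hc _ (hd _ hx)
      add_mem' := by intro c d hc hd x hx; rw [add_mul]; exact A.add_mem (hc _ hx) (hd _ hx)
      zero_mem' := by intro x hx; simpa using A.zero_mem
      neg_mem' := by intro c hc x hx; rw [neg_mul]; exact A.neg_mem (hc _ hx) } with hS
  have hζS : (ζ : K) ∈ S := fun x hx => hA x hx
  -- units of K lying in S form a subgroup
  set G : Subgroup Kˣ :=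
    { carrier := {u : Kˣ | (u : K) ∈ S}
      one_mem' := S.one_mem
      mul_mem' := fun hu hv => S.mul_mem hu hv
      inv_mem' := by
        intro u hu
        show ((u⁻¹ : Kˣ) : K) ∈ S
        have h15 : (u : K) ^ 15 = 1 := by
          have := FiniteField.pow_card_sub_one_eq_one (u : K) u.ne_zero
          rwa [hK] at this
        have : ((u⁻¹ : Kˣ) : K) = (u : K) ^ 14 := by
          rw [← Units.val_pow_eq_pow_val]
          congr 1
          rw [inv_eq_iff_mul_eq_one, ← pow_succ']
          ext
          push_cast [Units.val_pow_eq_pow_val]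
          exact h15
        rw [this]
        exact S.pow_mem hu 14 } with hG
  have hζG : ζ ∈ G := hζS
  -- cards
  have hcardKx : Nat.card Kˣ = 15 := by
    rw [Nat.card_eq_fintype_card, Fintype.card_units, hK]
  have h5 : (5 : ℕ) ∣ Nat.card G := by
    have : orderOf (⟨ζ, hζG⟩ : G) = 5 := (Subgroup.orderOf_coe _).symm.trans hζ
    calc (5:ℕ) = orderOf (⟨ζ, hζG⟩ : G) := this.symm
      _ ∣ Nat.card G := orderOf_dvd_natCard _
  have hGdvd : Nat.card G ∣ 15 := by
    rw [← hcardKx]; exact Subgroup.card_subgroup_dvd_card G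
  -- |S| = |G| + 1
  have hset : (S : Set K) = insert 0 ((fun u : Kˣ => (u : K)) '' (G : Set Kˣ)) := by
    ext x
    constructor
    · intro hx
      by_cases h0 : x = 0
      · exact Or.inl h0
      · exact Or.inr ⟨Units.mk0 x h0, hx, rfl⟩
    · rintro (rfl | ⟨u, hu, rfl⟩)
      · exact S.zero_mem
      · exact hu
  have hScard : Nat.card S = Nat.card G + 1 := by
    have h1 : Nat.card S = (S : Set K).ncard := (Nat.card_coe_set_eq _)
    have h2 : Nat.card G = ((G : Set Kˣ)).ncard := (Nat.card_coe_set_eq _)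
    rw [h1, h2, hset, Set.ncard_insert_of_notMem, Set.ncard_image_of_injective _ Units.val_injective]
    rintro ⟨u, _, hu0⟩
    exact u.ne_zero hu0
  have hSdvd : Nat.card S ∣ 16 := by
    have : Nat.card S.toAddSubgroup ∣ Nat.card K :=
      AddSubgroup.card_addSubgroup_dvd_card S.toAddSubgroup
    rwa [Nat.card_eq_fintype_card (α := K), hK] at this
  -- conclude |S| = 16
  have hS16 : Nat.card S = 16 := by
    set g := Nat.card G with hg
    clear_value g
    have hSdvd' : g + 1 ∣ 16 := hScard ▸ hSdvd
    have hle : g ≤ 15 := Nat.le_of_dvd (by norm_num) hGdvd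
    interval_cases g <;> omega
  -- S is everything, so A is an ideal
  have hStop : ∀ c : K, ∀ x ∈ A, c * x ∈ A := by
    have htop : S.toAddSubgroup = ⊤ := by
      apply AddSubgroup.eq_top_of_card_eq
      show Nat.card S = Nat.card K
      rw [hS16, Nat.card_eq_fintype_card, hK]
    intro c x hx
    have hc : c ∈ S.toAddSubgroup := htop.symm ▸ AddSubgroup.mem_top c
    exact hc x hx
  by_cases hbot : A = ⊥
  · exact Or.inl hbot
  · right
    obtain ⟨a, haA, ha0⟩ : ∃ a ∈ A, a ≠ 0 := by
      by_contra h
      push_neg at h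
      exact hbot ((AddSubgroup.eq_bot_iff_forall A).mpr h)
    ext y
    simp only [AddSubgroup.mem_top, iff_true]
    have := hStop (y * a⁻¹) a haA
    rwa [mul_assoc, inv_mul_cancel₀ ha0, mul_one] at this
end
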